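/- arXiv:0710.2641 — 3 statements merged into one kernel-verified Lean document; each statement's English description precedes it below -/
import Mathlib

section
/- Let G = {g_1,…,g_ν} be an O-border prebasis of a zero-dimensional ideal I (over a field K) whose formal multiplication matrices A_1,…,A_n pairwise commute. Then G is an O-border basis of the ideal it generates, i.e., P = (G) ⊕ ⟨O⟩_K. -/
/-!
The commuting matrices `A₁, …, Aₙ` make `p ↦ p(A₁, …, Aₙ) e₀` a well-defined `K`-linear map
`φ : K[x] → K^O`, where `e₀` is the basis vector of the monomial `1`, and
`φ (x_k p) = A_k φ(p)`. Walking up the order ideal one monomial at a time gives `φ(t) = e_t` for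
`t ∈ O`, and then `φ(b) = (a_{bt})_t` for every border term `b`, so `φ` kills each `g_b` and
hence the ideal `(G)`; as `φ` is injective on `⟨O⟩_K`, the sum `(G) + ⟨O⟩_K` is direct.
On the other hand `(G) + ⟨O⟩_K` contains `1` and is stable under each `x_k`, since `x_k t` is
either in `O` or a border term `b = g_b + Σ a_{bt} t`, so it is the whole ring.
-/

open MvPolynomial Finsupp

open scoped Classical

/-- The border of a finite set of monomials (represented as exponent vectors). -/
noncomputable def borderSet (n : ℕ) (O : Finset (Fin n →₀ ℕ)) : Finset (Fin n →₀ ℕ) :=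
  (O.biUnion (fun t => Finset.image (fun k => t + Finsupp.single k 1) Finset.univ)) \ O

open scoped Matrix

open scoped IsMulCommutative in
noncomputable def MvPolynomial.aevalOfCommute {R A σ : Type*} [CommSemiring R] [Semiring A]
    [Algebra R A] (f : σ → A) (hf : ∀ i j, Commute (f i) (f j)) : MvPolynomial σ R →ₐ[R] A :=
  have := Algebra.isMulCommutative_adjoin R (s := Set.range f)
    (by rintro _ ⟨i, rfl⟩ _ ⟨j, rfl⟩; exact hf i j)
  (Algebra.adjoin R (Set.range f)).val.comp
    (aeval fun i => ⟨f i, Algebra.subset_adjoin ⟨i, rfl⟩⟩)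

theorem MvPolynomial.aevalOfCommute_X {R A σ : Type*} [CommSemiring R] [Semiring A]
    [Algebra R A] (f : σ → A) (hf : ∀ i j, Commute (f i) (f j)) (i : σ) :
    aevalOfCommute (R := R) f hf (X i) = f i := by
  simp [aevalOfCommute]

theorem MvPolynomial.X_mul_monomial_one {R σ : Type*} [CommSemiring R] (i : σ) (s : σ →₀ ℕ) :
    (X i * monomial s 1 : MvPolynomial σ R) = monomial (s + single i 1) 1 := by
  rw [monomial_add_single, pow_one, mul_comm]

theorem MvPolynomial.submodule_eq_top_of_X_mul_mem {R σ : Type*} [CommSemiring R]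
    {S : Submodule R (MvPolynomial σ R)} (h1 : 1 ∈ S) (hX : ∀ i, ∀ p ∈ S, X i * p ∈ S) :
    S = ⊤ := by
  refine Submodule.eq_top_iff'.2 fun p => ?_
  induction p using MvPolynomial.induction_on with
  | C c => simpa [C_eq_smul_one] using S.smul_mem c h1
  | add p q hp hq => exact S.add_mem hp hq
  | mul_X p i hp => simpa [mul_comm] using hX i p hp

theorem Finsupp.eq_zero_or_exists_eq_add_single {σ : Type*} (t : σ →₀ ℕ) :
    t = 0 ∨ ∃ s i, t = s + single i 1 := by
  refine or_iff_not_imp_left.2 fun ht => ?_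
  obtain ⟨i, hi⟩ := Finsupp.ne_iff.1 ht
  have hle : single i 1 ≤ t := single_le_iff.2 (Nat.one_le_iff_ne_zero.2 hi)
  exact ⟨t - single i 1, i, (tsub_add_cancel_of_le hle).symm⟩

namespace Matrix

variable {R ι σ : Type*} [CommSemiring R] [Fintype ι] [DecidableEq ι]
  (M : σ → Matrix ι ι R) (hM : ∀ i j, Commute (M i) (M j)) (v : ι → R)

noncomputable def evalMulVec : MvPolynomial σ R →ₗ[R] ι → R where
  toFun p := aevalOfCommute M hM p *ᵥ v
  map_add' p q := by simp [add_mulVec]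
  map_smul' c p := by simp [smul_mulVec]

theorem evalMulVec_one : evalMulVec M hM v 1 = v := by
  simp only [evalMulVec, LinearMap.coe_mk, AddHom.coe_mk, map_one, one_mulVec]

theorem evalMulVec_mul (p q : MvPolynomial σ R) :
    evalMulVec M hM v (p * q) = aevalOfCommute M hM p *ᵥ evalMulVec M hM v q := by
  simp [evalMulVec, mulVec_mulVec]

end Matrix

section BorderPrebasis

variable {K : Type*} [CommRing K] {n : ℕ} {O : Finset (Fin n →₀ ℕ)}

theorem mem_borderSet {b : Fin n →₀ ℕ} :
    b ∈ borderSet n O ↔ b ∉ O ∧ ∃ t ∈ O, ∃ k, t + single k 1 = b := by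
  simp [borderSet, and_comm]

theorem add_single_mem_borderSet {t : Fin n →₀ ℕ} (ht : t ∈ O) {k : Fin n}
    (hk : t + single k 1 ∉ O) : t + single k 1 ∈ borderSet n O :=
  mem_borderSet.2 ⟨hk, t, ht, k, rfl⟩

noncomputable def formalMulMatrix (O : Finset (Fin n →₀ ℕ))
    (a : (Fin n →₀ ℕ) → (Fin n →₀ ℕ) → K) (k : Fin n) : Matrix O O K :=
  Matrix.of fun r i =>
    if (i : Fin n →₀ ℕ) + single k 1 ∈ O then
      (if (r : Fin n →₀ ℕ) = (i : Fin n →₀ ℕ) + single k 1 then 1 else 0)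
    else a ((i : Fin n →₀ ℕ) + single k 1) r

variable {a : (Fin n →₀ ℕ) → (Fin n →₀ ℕ) → K}

theorem formalMulMatrix_mulVec_single_of_mem {t : Fin n →₀ ℕ} (ht : t ∈ O) {k : Fin n}
    (htk : t + single k 1 ∈ O) :
    formalMulMatrix O a k *ᵥ Pi.single ⟨t, ht⟩ 1 = Pi.single ⟨t + single k 1, htk⟩ 1 := by
  ext r
  simp [formalMulMatrix, htk, Pi.single_apply, ← Subtype.coe_inj]

theorem formalMulMatrix_mulVec_single_of_notMem {t : Fin n →₀ ℕ} (ht : t ∈ O) {k : Fin n}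
    (htk : t + single k 1 ∉ O) :
    formalMulMatrix O a k *ᵥ Pi.single ⟨t, ht⟩ 1 = fun r : O => a (t + single k 1) r := by
  ext r
  simp [formalMulMatrix, htk]

variable {g : (Fin n →₀ ℕ) → MvPolynomial (Fin n) K}

theorem X_mul_monomial_mem_sup_span (h : ∀ b ∈ borderSet n O,
      g b = monomial b 1 - ∑ t ∈ O, C (a b t) * monomial t 1)
    {t : Fin n →₀ ℕ} (ht : t ∈ O) (k : Fin n) :
    X k * monomial t 1 ∈ (Ideal.span {p | ∃ b ∈ borderSet n O, p = g b}).restrictScalars K ⊔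
      Submodule.span K {p | ∃ t ∈ O, p = monomial t 1} := by
  rw [X_mul_monomial_one]
  by_cases htk : t + single k 1 ∈ O
  · exact Submodule.mem_sup_right (Submodule.subset_span ⟨_, htk, rfl⟩)
  have hb := add_single_mem_borderSet ht htk
  rw [← sub_add_cancel (monomial _ 1) (∑ s ∈ O, C (a (t + single k 1) s) * monomial s 1),
    ← h _ hb]
  refine Submodule.add_mem_sup (Ideal.subset_span ⟨_, hb, rfl⟩)
    (Submodule.sum_mem _ fun s hs => ?_)
  rw [C_mul']
  exact Submodule.smul_mem _ _ (Submodule.subset_span ⟨s, hs, rfl⟩)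

theorem codisjoint_span_prebasis_span_orderIdeal (h0 : 0 ∈ O) (h : ∀ b ∈ borderSet n O,
      g b = monomial b 1 - ∑ t ∈ O, C (a b t) * monomial t 1) :
    Codisjoint ((Ideal.span {p | ∃ b ∈ borderSet n O, p = g b}).restrictScalars K)
      (Submodule.span K {p | ∃ t ∈ O, p = monomial t 1}) := by
  rw [codisjoint_iff]
  refine submodule_eq_top_of_X_mul_mem
    (Submodule.mem_sup_right (Submodule.subset_span ⟨0, h0, rfl⟩)) fun k p hp => ?_
  obtain ⟨q, hq, r, hr, rfl⟩ := Submodule.mem_sup.1 hp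
  have hspan : Submodule.span K {p | ∃ t ∈ O, p = monomial t 1} ≤
      ((Ideal.span {p | ∃ b ∈ borderSet n O, p = g b}).restrictScalars K ⊔
        Submodule.span K {p | ∃ t ∈ O, p = monomial t 1}).comap (LinearMap.mulLeft K (X k)) :=
    Submodule.span_le.2 fun _ ⟨t, ht, hp⟩ => hp ▸ X_mul_monomial_mem_sup_span h ht k
  rw [mul_add]
  exact add_mem (Submodule.mem_sup_left (Ideal.mul_mem_left _ _ hq)) (hspan hr)

variable (hM : ∀ k l, Commute (formalMulMatrix O a k) (formalMulMatrix O a l))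

theorem evalMulVec_formalMulMatrix_monomial_of_mem (h0 : 0 ∈ O)
    (hO : ∀ t ∈ O, ∀ s, s ≤ t → s ∈ O) {t : Fin n →₀ ℕ} (ht : t ∈ O) :
    Matrix.evalMulVec (formalMulMatrix O a) hM (Pi.single ⟨0, h0⟩ 1) (monomial t 1) =
      Pi.single ⟨t, ht⟩ 1 := by
  induction t using WellFoundedLT.induction with
  | ind t ih =>
    obtain rfl | ⟨s, k, rfl⟩ := t.eq_zero_or_exists_eq_add_single
    · rw [monomial_zero', C_1, Matrix.evalMulVec_one]
    have hs : s ∈ O := hO _ ht s le_self_add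
    rw [← X_mul_monomial_one, Matrix.evalMulVec_mul, aevalOfCommute_X,
      ih s (lt_add_of_pos_right _ (pos_iff_ne_zero.2 (by simp))) hs,
      formalMulMatrix_mulVec_single_of_mem hs ht]

theorem evalMulVec_formalMulMatrix_monomial_of_mem_borderSet (h0 : 0 ∈ O)
    (hO : ∀ t ∈ O, ∀ s, s ≤ t → s ∈ O) {b : Fin n →₀ ℕ} (hb : b ∈ borderSet n O) :
    Matrix.evalMulVec (formalMulMatrix O a) hM (Pi.single ⟨0, h0⟩ 1) (monomial b 1) =
      fun r : O => a b r := by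
  obtain ⟨hbO, t, ht, k, rfl⟩ := mem_borderSet.1 hb
  rw [← X_mul_monomial_one, Matrix.evalMulVec_mul, aevalOfCommute_X,
    evalMulVec_formalMulMatrix_monomial_of_mem hM h0 hO ht,
    formalMulMatrix_mulVec_single_of_notMem ht hbO]

theorem evalMulVec_formalMulMatrix_prebasis (h0 : 0 ∈ O)
    (hO : ∀ t ∈ O, ∀ s, s ≤ t → s ∈ O) {b : Fin n →₀ ℕ} (hb : b ∈ borderSet n O) :
    Matrix.evalMulVec (formalMulMatrix O a) hM (Pi.single ⟨0, h0⟩ 1)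
      (monomial b 1 - ∑ t ∈ O, C (a b t) * monomial t 1) = 0 := by
  rw [map_sub, map_sum, evalMulVec_formalMulMatrix_monomial_of_mem_borderSet hM h0 hO hb,
    sub_eq_zero, ← Finset.sum_coe_sort O]
  calc (fun r : O => a b r) = ∑ t : O, Pi.single t (a b t) := (Finset.univ_sum_single _).symm
    _ = _ := Finset.sum_congr rfl fun t _ => by
      rw [C_mul', map_smul, evalMulVec_formalMulMatrix_monomial_of_mem hM h0 hO t.2,
        ← Pi.single_smul', smul_eq_mul, mul_one]

theorem span_prebasis_le_ker_evalMulVec (h0 : 0 ∈ O) (hO : ∀ t ∈ O, ∀ s, s ≤ t → s ∈ O)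
    (h : ∀ b ∈ borderSet n O, g b = monomial b 1 - ∑ t ∈ O, C (a b t) * monomial t 1) :
    (Ideal.span {p | ∃ b ∈ borderSet n O, p = g b}).restrictScalars K ≤
      LinearMap.ker (Matrix.evalMulVec (formalMulMatrix O a) hM (Pi.single ⟨0, h0⟩ 1)) := by
  intro p hp
  induction hp using Submodule.span_induction with
  | mem _ hq =>
    obtain ⟨b, hb, rfl⟩ := hq
    rw [LinearMap.mem_ker, h b hb]
    exact evalMulVec_formalMulMatrix_prebasis hM h0 hO hb
  | zero => exact zero_mem _
  | add _ _ _ _ hx hy => exact add_mem hx hy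
  | smul c _ _ hx =>
    rw [LinearMap.mem_ker, smul_eq_mul, Matrix.evalMulVec_mul, LinearMap.mem_ker.1 hx,
      Matrix.mulVec_zero]

theorem disjoint_span_prebasis_span_orderIdeal
    (hM : ∀ k l, Commute (formalMulMatrix O a k) (formalMulMatrix O a l)) (h0 : 0 ∈ O)
    (hO : ∀ t ∈ O, ∀ s, s ≤ t → s ∈ O)
    (h : ∀ b ∈ borderSet n O, g b = monomial b 1 - ∑ t ∈ O, C (a b t) * monomial t 1) :
    Disjoint ((Ideal.span {p | ∃ b ∈ borderSet n O, p = g b}).restrictScalars K)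
      (Submodule.span K {p | ∃ t ∈ O, p = monomial t 1}) := by
  have hli : LinearIndependent K
      (Matrix.evalMulVec (formalMulMatrix O a) hM (Pi.single ⟨0, h0⟩ 1) ∘
        fun t : O => monomial (t : Fin n →₀ ℕ) (1 : K)) := by
    convert (Pi.basisFun K O).linearIndependent using 1
    funext t
    simp [evalMulVec_formalMulMatrix_monomial_of_mem hM h0 hO t.2]
  have hrange : Set.range (fun t : O => monomial (t : Fin n →₀ ℕ) (1 : K)) =
      {p | ∃ t ∈ O, p = monomial t 1} := by
    ext
    simp [eq_comm]
  rw [← hrange]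
  exact (Submodule.range_ker_disjoint hli).symm.mono_left
    (span_prebasis_le_ker_evalMulVec hM h0 hO h)

end BorderPrebasis

/-- **Buchberger criterion for border bases.** If the formal multiplication matrices of an
`O`-border prebasis pairwise commute, then the prebasis is an `O`-border basis of the ideal it
generates, i.e. `P = (G) ⊕ ⟨O⟩_K`. -/
theorem borderBasis_of_commuting_multiplication_matrices
    (K : Type*) [Field K] (n : ℕ)
    (O : Finset (Fin n →₀ ℕ)) (h0 : (0 : Fin n →₀ ℕ) ∈ O)
    (hO : ∀ t ∈ O, ∀ s : Fin n →₀ ℕ, s ≤ t → s ∈ O)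
    -- the coefficients of the prebasis: `g b = b - Σ_{t ∈ O} a b t · t`
    (a : (Fin n →₀ ℕ) → (Fin n →₀ ℕ) → K)
    (g : (Fin n →₀ ℕ) → MvPolynomial (Fin n) K)
    (hgdef : ∀ b ∈ borderSet n O,
      g b = monomial b 1 - ∑ t ∈ O, MvPolynomial.C (a b t) * monomial t 1)
    -- the formal multiplication matrices
    (A : Fin n → Matrix ↥O ↥O K)
    (hA : ∀ (k : Fin n) (r i : ↥O), A k r i =
      if ((i : Fin n →₀ ℕ) + Finsupp.single k 1) ∈ O then
        (if (r : Fin n →₀ ℕ) = (i : Fin n →₀ ℕ) + Finsupp.single k 1 then 1 else 0)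
      else a ((i : Fin n →₀ ℕ) + Finsupp.single k 1) r)
    (hcomm : ∀ k l : Fin n, A k * A l = A l * A k) :
    IsCompl
      (Submodule.restrictScalars K
        (Ideal.span {p : MvPolynomial (Fin n) K | ∃ b ∈ borderSet n O, p = g b}))
      (Submodule.span K {p : MvPolynomial (Fin n) K | ∃ t ∈ O, p = monomial t 1}) := by
  obtain rfl : A = formalMulMatrix O a := funext fun k => Matrix.ext (hA k)
  exact ⟨disjoint_span_prebasis_span_orderIdeal hcomm h0 hO hgdef,
    codisjoint_span_prebasis_span_orderIdeal h0 hgdef⟩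
end

section
/- Let P be graded by positive weights W and suppose the order ideal O has a maxdeg_W border, i.e., deg_W(b_j) ≥ deg_W(t_i) for all t_i ∈ O and b_j ∈ ∂O. Then the generic homogeneous multiplication matrices A_1,…,A_n pairwise commute, i.e., A_k A_ℓ = A_ℓ A_k in Mat_μ(K[c_{ij}]) for all k, ℓ. -/
open MvPolynomial Finsupp

open scoped Classical

set_option synthInstance.maxHeartbeats 1000000
set_option maxHeartbeats 1000000

/-- The polynomial ring `K[c_{ij}]` in the generic coefficients, indexed by pairs `(t, b)`. -/
abbrev CoeffRing (K : Type*) [Field K] (n : ℕ) : Type _ :=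
  MvPolynomial ((Fin n →₀ ℕ) × (Fin n →₀ ℕ)) K

/-- The `W`-degree of a monomial with respect to the weights `w`. -/
def degW (n : ℕ) (w : Fin n → ℕ) (m : Fin n →₀ ℕ) : ℕ := ∑ i, w i * m i

/-- The `k`-th generic homogeneous multiplication matrix with respect to `O`: the formal
multiplication matrix of the generic homogeneous `O`-border prebasis
`g_b = b − Σ_{deg_W t = deg_W b} c_{t,b} t`. -/
noncomputable def AgenH (K : Type*) [Field K] (n : ℕ) (w : Fin n → ℕ)
    (O : Finset (Fin n →₀ ℕ)) (k : Fin n) : Matrix ↥O ↥O (CoeffRing K n) :=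
  Matrix.of fun r i =>
    if ((i : Fin n →₀ ℕ) + Finsupp.single k 1) ∈ O then
      (if (r : Fin n →₀ ℕ) = (i : Fin n →₀ ℕ) + Finsupp.single k 1 then 1 else 0)
    else if ((i : Fin n →₀ ℕ) + Finsupp.single k 1) ∈ borderSet n O then
      (if degW n w (r : Fin n →₀ ℕ) = degW n w ((i : Fin n →₀ ℕ) + Finsupp.single k 1) then
        X ((r : Fin n →₀ ℕ), (i : Fin n →₀ ℕ) + Finsupp.single k 1)
      else 0)
    else 0

lemma degW_add' (n : ℕ) (w : Fin n → ℕ) (a b : Fin n →₀ ℕ) :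
    degW n w (a + b) = degW n w a + degW n w b := by
  unfold degW
  rw [← Finset.sum_add_distrib]
  exact Finset.sum_congr rfl fun i _ => by simp [Nat.mul_add]

lemma degW_single' (n : ℕ) (w : Fin n → ℕ) (k : Fin n) :
    degW n w (Finsupp.single k 1) = w k := by
  unfold degW
  rw [Finset.sum_eq_single k]
  · simp
  · intro i _ hik
    simp [Finsupp.single_apply, Ne.symm hik]
  · simp

lemma mem_or_border' (n : ℕ) (O : Finset (Fin n →₀ ℕ)) {i : Fin n →₀ ℕ} (hi : i ∈ O)
    (k : Fin n) :
    i + Finsupp.single k 1 ∈ O ∨ i + Finsupp.single k 1 ∈ borderSet n O := by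
  by_cases h : i + Finsupp.single k 1 ∈ O
  · exact Or.inl h
  · refine Or.inr ?_
    simp only [borderSet, Finset.mem_sdiff, Finset.mem_biUnion, Finset.mem_image,
      Finset.mem_univ, true_and]
    exact ⟨⟨i, hi, k, rfl⟩, h⟩

lemma mul_apply_eq' (K : Type*) [Field K] (n : ℕ) (w : Fin n → ℕ) (hw : ∀ i, 0 < w i)
    (O : Finset (Fin n →₀ ℕ))
    (hO : ∀ t ∈ O, ∀ s : Fin n →₀ ℕ, s ≤ t → s ∈ O)
    (hmax : ∀ t ∈ O, ∀ b ∈ borderSet n O, degW n w t ≤ degW n w b)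
    (k l : Fin n) (r i : ↥O) :
    (AgenH K n w O k * AgenH K n w O l) r i =
      if (i : Fin n →₀ ℕ) + Finsupp.single l 1 + Finsupp.single k 1 ∈ O then
        (if (r : Fin n →₀ ℕ) = (i : Fin n →₀ ℕ) + Finsupp.single l 1 + Finsupp.single k 1
          then 1 else 0)
      else if degW n w (r : Fin n →₀ ℕ)
          = degW n w ((i : Fin n →₀ ℕ) + Finsupp.single l 1 + Finsupp.single k 1) then
        X ((r : Fin n →₀ ℕ), (i : Fin n →₀ ℕ) + Finsupp.single l 1 + Finsupp.single k 1)
      else 0 := by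
  rw [Matrix.mul_apply]
  by_cases hl : (i : Fin n →₀ ℕ) + Finsupp.single l 1 ∈ O
  · rw [Finset.sum_eq_single (⟨_, hl⟩ : ↥O)]
    · by_cases hk : (i : Fin n →₀ ℕ) + Finsupp.single l 1 + Finsupp.single k 1 ∈ O
      · simp [AgenH, hl, hk]
      · have hb := (mem_or_border' n O hl k).resolve_left hk
        simp [AgenH, hl, hk, hb]
    · intro j _ hj
      have hne : (j : Fin n →₀ ℕ) ≠ (i : Fin n →₀ ℕ) + Finsupp.single l 1 := by
        intro h; exact hj (Subtype.ext h)
      simp [AgenH, hl, hne]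
    · intro h; exact absurd (Finset.mem_univ _) h
  · have hb : (i : Fin n →₀ ℕ) + Finsupp.single l 1 ∈ borderSet n O :=
      (mem_or_border' n O i.2 l).resolve_left hl
    have hrle : degW n w (r : Fin n →₀ ℕ) ≤ degW n w ((i : Fin n →₀ ℕ) + Finsupp.single l 1) :=
      hmax _ r.2 _ hb
    rw [Finset.sum_eq_zero, eq_comm]
    · have hk : (i : Fin n →₀ ℕ) + Finsupp.single l 1 + Finsupp.single k 1 ∉ O := by
        intro h
        exact hl (hO _ h _ le_self_add)
      rw [if_neg hk, if_neg, eq_comm]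
      have hwk := hw k
      rw [degW_add', degW_single']
      omega
    · intro j _
      by_cases hdj : degW n w (j : Fin n →₀ ℕ)
          = degW n w ((i : Fin n →₀ ℕ) + Finsupp.single l 1)
      · have hjk : (j : Fin n →₀ ℕ) + Finsupp.single k 1 ∉ O := by
          intro h
          have := hmax _ h _ hb
          rw [degW_add', degW_single', hdj] at this
          have hwk := hw k
          omega
        have hjb := (mem_or_border' n O j.2 k).resolve_left hjk
        have hdr : degW n w (r : Fin n →₀ ℕ)
            ≠ degW n w ((j : Fin n →₀ ℕ) + Finsupp.single k 1) := by
          rw [degW_add', degW_single', hdj]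
          have hwk := hw k
          omega
        simp [AgenH, hl, hjk, hjb, hdr]
      · simp [AgenH, hl, hb, hdj]

/-- If the order ideal `O` has a `maxdeg_W` border, then the generic homogeneous multiplication
matrices pairwise commute. -/
theorem generic_homogeneous_multiplication_matrices_commute (K : Type*) [Field K] (n : ℕ)
    (w : Fin n → ℕ) (hw : ∀ i, 0 < w i)
    (O : Finset (Fin n →₀ ℕ)) (h0 : (0 : Fin n →₀ ℕ) ∈ O)
    (hO : ∀ t ∈ O, ∀ s : Fin n →₀ ℕ, s ≤ t → s ∈ O)
    (hmax : ∀ t ∈ O, ∀ b ∈ borderSet n O, degW n w t ≤ degW n w b) :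
    ∀ k l : Fin n, AgenH K n w O k * AgenH K n w O l = AgenH K n w O l * AgenH K n w O k := by
  intro k l
  ext r i
  rw [mul_apply_eq' K n w hw O hO hmax k l r i,
    mul_apply_eq' K n w hw O hO hmax l k r i,
    add_right_comm (i : Fin n →₀ ℕ) (Finsupp.single l 1) (Finsupp.single k 1)]
end

section
/- Suppose O has a maxdeg_W border and I ⊂ P is a homogeneous zero-dimensional ideal with O-border basis g_j = b_j − Σ_i c_{ij} t_i. Let J ⊂ K[z][x_1,…,x_n] be generated by the polynomials b_j − Σ_i c_{ij} z t_i. Then K[z] → K[z][x_1,…,x_n]/J is flat with free basis the residue classes of O, the specialization z ↦ 1 gives P/I, and the specialization z ↦ 0 gives P/(b_1,…,b_ν). -/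
/-!
Homogeneity of `I` together with `I ∩ ⟨O⟩_K = 0` forces `c_{tb} = 0` unless `t` and `b` have
the same degree, so the deformed prebasis `b - z Σ c_{tb} t` is homogeneous for the grading with
`deg z = 0`. For a homogeneous prebasis whose border terms are of degree at least that of every
term of `O`, no nonzero element of the ideal is supported on `O`: in a combination `Σ q_b g_b`,
the coefficients in degrees `≤ min deg ∂O` only see the `x`-constant terms `q_b(0)`, and these
vanish for border terms of minimal degree because `b ∉ O`. Border division shows that `O` spans
modulo any prebasis ideal, so `O` is a `K[z]`-basis of the quotient. At `z = 1` the generators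
become the `g_b`, which generate `I` since `O` spans modulo them; at `z = 0` they become the
border terms.
-/

open MvPolynomial Finsupp

open scoped Classical

lemma setOf_exists_eq_eq_image {α β : Type*} (s : Finset α) (f : α → β) :
    {p | ∃ a ∈ s, p = f a} = f '' s := by
  ext; simp [eq_comm]

section BorderPrebasis

variable {n : ℕ} {R : Type*} [CommRing R] {O : Finset (Fin n →₀ ℕ)}

lemma degW_eq_weight (w : Fin n → ℕ) (m : Fin n →₀ ℕ) : degW n w m = weight w m := by
  simp [degW, Finsupp.weight_apply, Finsupp.sum_fintype, mul_comm]

lemma add_single_mem_borderSet_s17 {s : Fin n →₀ ℕ} (hs : s ∈ O) (i : Fin n)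
    (h : s + single i 1 ∉ O) : s + single i 1 ∈ borderSet n O :=
  Finset.mem_sdiff.mpr
    ⟨Finset.mem_biUnion.mpr ⟨s, hs, Finset.mem_image_of_mem _ (Finset.mem_univ i)⟩, h⟩

lemma notMem_of_mem_borderSet {b : Fin n →₀ ℕ} (hb : b ∈ borderSet n O) : b ∉ O :=
  (Finset.mem_sdiff.mp hb).2

theorem exists_mem_borderSet_add_eq {s u : Fin n →₀ ℕ} (hs : s ∈ O) (hsu : s + u ∉ O) :
    ∃ b ∈ borderSet n O, ∃ u' < u, b + u' = s + u := by
  induction u using WellFoundedLT.induction generalizing s with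
  | ind u ih =>
  obtain ⟨i, hi⟩ : ∃ i, u i ≠ 0 := by
    by_contra! h
    obtain rfl : u = 0 := Finsupp.ext h
    exact hsu (by simpa using hs)
  obtain ⟨u₁, rfl⟩ : ∃ u₁, u = u₁ + single i 1 := ⟨u - single i 1,
    (tsub_add_cancel_of_le (single_le_iff.mpr (Nat.one_le_iff_ne_zero.mpr hi))).symm⟩
  have hlt : u₁ < u₁ + single i 1 := lt_add_of_pos_right _ (pos_iff_ne_zero.mpr (by simp))
  have hassoc : s + (u₁ + single i 1) = s + single i 1 + u₁ := by abel
  by_cases hsi : s + single i 1 ∈ O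
  · obtain ⟨b, hb, u', hu', heq⟩ := ih u₁ hlt hsi (hassoc ▸ hsu)
    exact ⟨b, hb, u', hu'.trans hlt, heq.trans hassoc.symm⟩
  · exact ⟨_, add_single_mem_borderSet_s17 hs i hsi, u₁, hlt, hassoc.symm⟩

noncomputable def borderPrebasisPoly (O : Finset (Fin n →₀ ℕ)) (γ : (Fin n →₀ ℕ) → R)
    (b : Fin n →₀ ℕ) : MvPolynomial (Fin n) R :=
  monomial b 1 - ∑ t ∈ O, C (γ t) * monomial t 1

noncomputable def borderPrebasisIdeal (O : Finset (Fin n →₀ ℕ))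
    (γ : (Fin n →₀ ℕ) → (Fin n →₀ ℕ) → R) : Ideal (MvPolynomial (Fin n) R) :=
  Ideal.span ((fun b => borderPrebasisPoly O (γ b) b) '' borderSet n O)

lemma coeff_borderPrebasisPoly (b : Fin n →₀ ℕ) (γ : (Fin n →₀ ℕ) → R)
    (m : Fin n →₀ ℕ) :
    coeff m (borderPrebasisPoly O γ b) =
      (if b = m then 1 else 0) - (if m ∈ O then γ m else 0) := by
  simp [borderPrebasisPoly, coeff_sum, coeff_monomial, coeff_C_mul]

lemma map_borderPrebasisIdeal {S : Type*} [CommRing S] (f : R →+* S)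
    (γ : (Fin n →₀ ℕ) → (Fin n →₀ ℕ) → R) :
    Ideal.map (MvPolynomial.map f) (borderPrebasisIdeal O γ) =
      borderPrebasisIdeal O (fun b t => f (γ b t)) := by
  rw [borderPrebasisIdeal, borderPrebasisIdeal, Ideal.map_span, Set.image_image]
  congr 1
  refine Set.image_congr fun b _ => ?_
  simp [borderPrebasisPoly, map_monomial]

theorem monomial_add_mem_borderPrebasisIdeal_sup_restrictSupport
    (γ : (Fin n →₀ ℕ) → (Fin n →₀ ℕ) → R) {s : Fin n →₀ ℕ} (hs : s ∈ O) (u : Fin n →₀ ℕ) :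
    monomial (s + u) (1 : R) ∈
      (borderPrebasisIdeal O γ).restrictScalars R ⊔
        restrictSupport R (O : Set (Fin n →₀ ℕ)) := by
  induction u using WellFoundedLT.induction generalizing s with
  | ind u ih =>
  by_cases hsu : s + u ∈ O
  · exact Submodule.mem_sup_right ((monomial_mem_restrictSupport R).mpr (Or.inl hsu))
  obtain ⟨b, hb, u', hu', heq⟩ := exists_mem_borderSet_add_eq hs hsu
  have hrewrite : monomial (s + u) (1 : R) = monomial u' 1 * borderPrebasisPoly O (γ b) b +
      ∑ t ∈ O, γ b t • monomial (t + u') 1 := by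
    simp [← heq, borderPrebasisPoly, mul_sub, Finset.mul_sum, monomial_mul, smul_eq_C_mul,
      add_comm, mul_left_comm]
  rw [hrewrite]
  refine Submodule.add_mem _ (Submodule.mem_sup_left ?_)
    (Submodule.sum_mem _ fun t ht => Submodule.smul_mem _ _ (ih u' hu' ht))
  exact Ideal.mul_mem_left _ _ (Ideal.subset_span ⟨b, hb, rfl⟩)

theorem borderPrebasisIdeal_sup_restrictSupport_eq_top (h0 : 0 ∈ O)
    (γ : (Fin n →₀ ℕ) → (Fin n →₀ ℕ) → R) :
    (borderPrebasisIdeal O γ).restrictScalars R ⊔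
      restrictSupport R (O : Set (Fin n →₀ ℕ)) = ⊤ := by
  rw [eq_top_iff, ← restrictSupport_univ, restrictSupport_eq_span, Submodule.span_le]
  rintro _ ⟨m, -, rfl⟩
  simpa using monomial_add_mem_borderPrebasisIdeal_sup_restrictSupport γ h0 m

section Homogeneous

variable {w : Fin n → ℕ}

lemma coeff_mul_eq_coeff_zero_mul_of_weight_le (hw : ∀ i, 0 < w i)
    {G : MvPolynomial (Fin n) R} {e : ℕ} (hG : G.IsWeightedHomogeneous w e)
    (q : MvPolynomial (Fin n) R) {m : Fin n →₀ ℕ} (hm : weight w m ≤ e) :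
    coeff m (q * G) = coeff 0 q * coeff m G := by
  rw [coeff_mul, Finset.sum_eq_single (0, m)]
  · rintro ⟨u, v⟩ huv hne
    rw [Finset.HasAntidiagonal.mem_antidiagonal] at huv
    obtain ⟨i, hi⟩ : ∃ i, u i ≠ 0 := by
      by_contra! h
      obtain rfl : u = 0 := Finsupp.ext h
      exact hne (by simpa using huv)
    have hv : weight w v < e := by
      have := le_weight_of_ne_zero' w hi
      have := congrArg (weight w) huv
      simp only [map_add] at this
      linarith [hw i]
    rw [hG.coeff_eq_zero v hv.ne, mul_zero]
  · simp

lemma isWeightedHomogeneous_borderPrebasisPoly {b : Fin n →₀ ℕ} (γ : (Fin n →₀ ℕ) → R)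
    (hγ : ∀ t ∈ O, γ t ≠ 0 → weight w t = weight w b) :
    (borderPrebasisPoly O γ b).IsWeightedHomogeneous w (weight w b) := by
  intro d hd
  rw [coeff_borderPrebasisPoly] at hd
  by_cases hbd : b = d
  · rw [hbd]
  by_cases hdO : d ∈ O
  · exact hγ d hdO (by simpa [hbd, hdO] using hd)
  · simp [hbd, hdO] at hd

theorem disjoint_borderPrebasisIdeal_restrictSupport (hw : ∀ i, 0 < w i)
    (hmax : ∀ t ∈ O, ∀ b ∈ borderSet n O, weight w t ≤ weight w b)
    {γ : (Fin n →₀ ℕ) → (Fin n →₀ ℕ) → R}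
    (hγ : ∀ b ∈ borderSet n O, ∀ t ∈ O, γ b t ≠ 0 → weight w t = weight w b) :
    Disjoint ((borderPrebasisIdeal O γ).restrictScalars R)
      (restrictSupport R (O : Set (Fin n →₀ ℕ))) := by
  rw [Submodule.disjoint_def]
  intro F hFJ hFO
  have hFout : ∀ m ∉ O, coeff m F = 0 := fun m hm =>
    MvPolynomial.notMem_support_iff.mp fun h => hm ((mem_restrictSupport_iff R).mp hFO h)
  obtain ⟨q, hq⟩ := (Submodule.mem_span_image_finset_iff_exists_fun' _).mp hFJ
  simp only [smul_eq_mul] at hq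
  have hcoeff : ∀ m, (∀ b ∈ borderSet n O, weight w m ≤ weight w b) →
      coeff m F =
        ∑ b ∈ borderSet n O, coeff 0 (q b) * coeff m (borderPrebasisPoly O (γ b) b) := by
    intro m hm
    rw [← hq, coeff_sum]
    refine Finset.sum_congr rfl fun b hb => coeff_mul_eq_coeff_zero_mul_of_weight_le hw
      (isWeightedHomogeneous_borderPrebasisPoly _ (hγ b hb)) _ (hm b hb)
  have hq0 : ∀ b ∈ borderSet n O, (∀ b' ∈ borderSet n O, weight w b ≤ weight w b') →
      coeff 0 (q b) = 0 := by
    intro b hb hbmin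
    have := hcoeff b hbmin
    rw [hFout b (notMem_of_mem_borderSet hb)] at this
    simpa [coeff_borderPrebasisPoly, notMem_of_mem_borderSet hb, hb, eq_comm] using this
  ext t
  by_cases ht : t ∈ O
  · rw [hcoeff t (hmax t ht)]
    refine Finset.sum_eq_zero fun b hb => ?_
    have hbt : b ≠ t := fun h => notMem_of_mem_borderSet hb (h ▸ ht)
    by_cases hγbt : γ b t = 0
    · simp [coeff_borderPrebasisPoly, hbt, hγbt, ht]
    · have hbmin : ∀ b' ∈ borderSet n O, weight w b ≤ weight w b' :=
        hγ b hb t ht hγbt ▸ hmax t ht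
      rw [hq0 b hb hbmin, zero_mul]
  · exact hFout t ht

theorem weight_eq_of_borderPrebasisPoly_mem {I : Ideal (MvPolynomial (Fin n) R)}
    (hI : ∀ f ∈ I, ∀ d, weightedHomogeneousComponent w d f ∈ I)
    (hdisj : Disjoint (I.restrictScalars R) (restrictSupport R (O : Set (Fin n →₀ ℕ))))
    {b : Fin n →₀ ℕ} {γ : (Fin n →₀ ℕ) → R} (hmem : borderPrebasisPoly O γ b ∈ I)
    {t : Fin n →₀ ℕ} (ht : t ∈ O) (hγt : γ t ≠ 0) : weight w t = weight w b := by
  by_contra hne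
  set h := weightedHomogeneousComponent w (weight w t) (borderPrebasisPoly O γ b)
  have hsupp : h ∈ restrictSupport R (O : Set (Fin n →₀ ℕ)) := by
    rw [mem_restrictSupport_iff]
    intro m hm
    refine Finset.mem_coe.mpr (by_contra fun hmO => ?_)
    rw [Finset.mem_coe, MvPolynomial.mem_support_iff] at hm
    simp only [h, coeff_weightedHomogeneousComponent, coeff_borderPrebasisPoly, hmO,
      ↓reduceIte, sub_zero, ne_eq, ite_eq_right_iff, Classical.not_imp] at hm
    obtain ⟨hmt, rfl, -⟩ := hm
    exact hne hmt.symm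
  have h0 : h = 0 := Submodule.disjoint_def.mp hdisj h (hI _ hmem _) hsupp
  have hbt : b ≠ t := by rintro rfl; exact hne rfl
  exact hγt (by simpa [h, coeff_weightedHomogeneousComponent, coeff_borderPrebasisPoly, ht, hbt]
    using congrArg (coeff t) h0)

theorem isCompl_borderPrebasisIdeal_restrictSupport (hw : ∀ i, 0 < w i) (h0 : 0 ∈ O)
    (hmax : ∀ t ∈ O, ∀ b ∈ borderSet n O, weight w t ≤ weight w b)
    {γ : (Fin n →₀ ℕ) → (Fin n →₀ ℕ) → R}
    (hγ : ∀ b ∈ borderSet n O, ∀ t ∈ O, γ b t ≠ 0 → weight w t = weight w b) :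
    IsCompl ((borderPrebasisIdeal O γ).restrictScalars R)
      (restrictSupport R (O : Set (Fin n →₀ ℕ))) :=
  ⟨disjoint_borderPrebasisIdeal_restrictSupport hw hmax hγ,
    codisjoint_iff.mpr (borderPrebasisIdeal_sup_restrictSupport_eq_top h0 γ)⟩

end Homogeneous

theorem borderPrebasisIdeal_eq_of_le (h0 : 0 ∈ O) {γ : (Fin n →₀ ℕ) → (Fin n →₀ ℕ) → R}
    {I : Ideal (MvPolynomial (Fin n) R)} (hle : borderPrebasisIdeal O γ ≤ I)
    (hdisj : Disjoint (I.restrictScalars R) (restrictSupport R (O : Set (Fin n →₀ ℕ)))) :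
    borderPrebasisIdeal O γ = I := by
  apply Submodule.restrictScalars_injective R
  have hle' := Submodule.restrictScalars_mono R hle
  calc _ = _ ⊔ restrictSupport R (O : Set (Fin n →₀ ℕ)) ⊓ I.restrictScalars R := by
        rw [hdisj.symm.eq_bot, sup_bot_eq]
    _ = _ := by
        rw [← sup_inf_assoc_of_le _ hle', borderPrebasisIdeal_sup_restrictSupport_eq_top h0,
          top_inf_eq]

end BorderPrebasis

section Quotient

variable {R A ι : Type*} [CommRing R] [CommRing A] [Algebra R A] {J : Ideal A} {v : ι → A}

variable (R J) in
lemma ker_quotient_mkₐ_toLinearMap :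
    LinearMap.ker (Ideal.Quotient.mkₐ R J).toLinearMap = J.restrictScalars R := by
  ext; simp [Ideal.Quotient.eq_zero_iff_mem]

lemma linearIndependent_quotient_mk (hv : LinearIndependent R v)
    (h : Disjoint (J.restrictScalars R) (Submodule.span R (Set.range v))) :
    LinearIndependent R (fun i => Ideal.Quotient.mk J (v i)) :=
  hv.map (f := (Ideal.Quotient.mkₐ R J).toLinearMap)
    (ker_quotient_mkₐ_toLinearMap R J ▸ h.symm)

lemma span_range_quotient_mk_eq_top
    (h : J.restrictScalars R ⊔ Submodule.span R (Set.range v) = ⊤) :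
    Submodule.span R (Set.range fun i => Ideal.Quotient.mk J (v i)) = ⊤ := by
  set f := (Ideal.Quotient.mkₐ R J).toLinearMap
  have hJ : (J.restrictScalars R).map f = ⊥ :=
    LinearMap.le_ker_iff_map.mp (ker_quotient_mkₐ_toLinearMap R J).ge
  calc Submodule.span R (Set.range fun i => Ideal.Quotient.mk J (v i))
      = (Submodule.span R (Set.range v)).map f := by
        rw [Submodule.map_span, ← Set.range_comp]; rfl
    _ = (⊤ : Submodule R A).map f := by rw [← h, Submodule.map_sup, hJ, bot_sup_eq]
    _ = ⊤ := by
        rw [Submodule.map_top, LinearMap.range_eq_top]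
        exact Ideal.Quotient.mkₐ_surjective R J

end Quotient

section Monomials

variable {σ R : Type*} [CommRing R]

lemma linearIndependent_monomial_one_subtype (s : Finset (σ →₀ ℕ)) :
    LinearIndependent R (fun t : s => monomial (t : σ →₀ ℕ) (1 : R)) :=
  (basisMonomials σ R).linearIndependent.comp _ Subtype.val_injective

lemma span_range_monomial_one_subtype (s : Finset (σ →₀ ℕ)) :
    Submodule.span R (Set.range fun t : s => monomial (t : σ →₀ ℕ) (1 : R)) =
      restrictSupport R (s : Set (σ →₀ ℕ)) := by
  rw [restrictSupport_eq_span, Set.image_eq_range]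
  rfl

end Monomials

theorem maxdeg_homogeneous_deformation_general (K : Type*) [Field K] (n : ℕ)
    (w : Fin n → ℕ) (hw : ∀ i, 0 < w i)
    (O : Finset (Fin n →₀ ℕ)) (h0 : (0 : Fin n →₀ ℕ) ∈ O)
    (hmax : ∀ t ∈ O, ∀ b ∈ borderSet n O, degW n w t ≤ degW n w b)
    (I : Ideal (MvPolynomial (Fin n) K))
    (hIhom : ∀ f ∈ I, ∀ d : ℕ,
      (∑ m ∈ f.support.filter (fun m => degW n w m = d), monomial m (coeff m f)) ∈ I)
    (c : (Fin n →₀ ℕ) → (Fin n →₀ ℕ) → K)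
    (hmem : ∀ b ∈ borderSet n O,
      (monomial b 1 - ∑ t ∈ O, MvPolynomial.C (c b t) * monomial t 1 :
        MvPolynomial (Fin n) K) ∈ I)
    (hcompl : IsCompl (Submodule.restrictScalars K I)
      (Submodule.span K {p : MvPolynomial (Fin n) K | ∃ t ∈ O, p = monomial t 1}))
    (J : Ideal (MvPolynomial (Fin n) (Polynomial K)))
    (hJ : J = Ideal.span {p | ∃ b ∈ borderSet n O,
      p = monomial b 1 -
        ∑ t ∈ O, MvPolynomial.C (Polynomial.C (c b t) * Polynomial.X) * monomial t 1}) :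
    LinearIndependent (Polynomial K)
      (fun t : ↥O => Ideal.Quotient.mk J (monomial (t : Fin n →₀ ℕ) (1 : Polynomial K))) ∧
    Submodule.span (Polynomial K)
      (Set.range (fun t : ↥O => Ideal.Quotient.mk J
        (monomial (t : Fin n →₀ ℕ) (1 : Polynomial K)))) = ⊤ ∧
    Ideal.map (MvPolynomial.map (Polynomial.evalRingHom (1 : K))) J = I ∧
    Ideal.map (MvPolynomial.map (Polynomial.evalRingHom (0 : K))) J =
      Ideal.span {p : MvPolynomial (Fin n) K | ∃ b ∈ borderSet n O, p = monomial b 1} := by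
  simp only [degW_eq_weight] at hmax hIhom
  rw [setOf_exists_eq_eq_image, ← restrictSupport_eq_span] at hcompl
  have hc : ∀ b ∈ borderSet n O, ∀ t ∈ O, c b t ≠ 0 → weight w t = weight w b :=
    fun b hb t ht => weight_eq_of_borderPrebasisPoly_mem
      (fun f hf d => by rw [weightedHomogeneousComponent_apply]; exact hIhom f hf d)
      hcompl.disjoint (hmem b hb) ht
  have hJ' : J = borderPrebasisIdeal O fun b t => Polynomial.C (c b t) * Polynomial.X := by
    rw [hJ, borderPrebasisIdeal, ← setOf_exists_eq_eq_image]; rfl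
  have hJcompl := isCompl_borderPrebasisIdeal_restrictSupport hw h0 hmax
    (γ := fun b t => Polynomial.C (c b t) * Polynomial.X)
    fun b hb t ht h => hc b hb t ht fun h' => h (by simp [h'])
  rw [← span_range_monomial_one_subtype] at hJcompl
  refine ⟨linearIndependent_quotient_mk (linearIndependent_monomial_one_subtype O)
      (hJ' ▸ hJcompl.disjoint), span_range_quotient_mk_eq_top (hJ' ▸ hJcompl.codisjoint.eq_top),
    ?_, ?_⟩
  · rw [hJ', map_borderPrebasisIdeal]
    simpa using borderPrebasisIdeal_eq_of_le h0
      (Ideal.span_le.mpr (by rintro _ ⟨b, hb, rfl⟩; exact hmem b hb)) hcompl.disjoint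
  · rw [hJ', map_borderPrebasisIdeal, borderPrebasisIdeal, setOf_exists_eq_eq_image]
    simp [borderPrebasisPoly]

/-- **Homogeneous maxdeg border bases give flat deformations to the border term ideal.**
If `O` has a `maxdeg_W` border and the homogeneous ideal `I` has the `O`-border basis
`g_b = b − Σ_t c_{t,b} t`, then for the ideal `J ⊆ K[z][x_1,…,x_n]` generated by the
polynomials `b − Σ_t c_{t,b} z t`: the residue classes of the terms of `O` form a free
`K[z]`-module basis of `K[z][x_1,…,x_n]/J` (so `K[z] → K[z][x]/J` is flat), the specialization
`z ↦ 1` of `J` is `I`, and the specialization `z ↦ 0` of `J` is the border term ideal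
`(b_1,…,b_ν)`. -/
theorem maxdeg_homogeneous_deformation (K : Type*) [Field K] (n : ℕ)
    (w : Fin n → ℕ) (hw : ∀ i, 0 < w i)
    (O : Finset (Fin n →₀ ℕ)) (h0 : (0 : Fin n →₀ ℕ) ∈ O)
    (hO : ∀ t ∈ O, ∀ s : Fin n →₀ ℕ, s ≤ t → s ∈ O)
    (hmax : ∀ t ∈ O, ∀ b ∈ borderSet n O, degW n w t ≤ degW n w b)
    (I : Ideal (MvPolynomial (Fin n) K))
    (hIhom : ∀ f ∈ I, ∀ d : ℕ,
      (∑ m ∈ f.support.filter (fun m => degW n w m = d), monomial m (coeff m f)) ∈ I)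
    (c : (Fin n →₀ ℕ) → (Fin n →₀ ℕ) → K)
    (hmem : ∀ b ∈ borderSet n O,
      (monomial b 1 - ∑ t ∈ O, MvPolynomial.C (c b t) * monomial t 1 :
        MvPolynomial (Fin n) K) ∈ I)
    (hcompl : IsCompl (Submodule.restrictScalars K I)
      (Submodule.span K {p : MvPolynomial (Fin n) K | ∃ t ∈ O, p = monomial t 1}))
    (J : Ideal (MvPolynomial (Fin n) (Polynomial K)))
    (hJ : J = Ideal.span {p | ∃ b ∈ borderSet n O,
      p = monomial b 1 -
        ∑ t ∈ O, MvPolynomial.C (Polynomial.C (c b t) * Polynomial.X) * monomial t 1}) :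
    LinearIndependent (Polynomial K)
      (fun t : ↥O => Ideal.Quotient.mk J (monomial (t : Fin n →₀ ℕ) (1 : Polynomial K))) ∧
    Submodule.span (Polynomial K)
      (Set.range (fun t : ↥O => Ideal.Quotient.mk J
        (monomial (t : Fin n →₀ ℕ) (1 : Polynomial K)))) = ⊤ ∧
    Ideal.map (MvPolynomial.map (Polynomial.evalRingHom (1 : K))) J = I ∧
    Ideal.map (MvPolynomial.map (Polynomial.evalRingHom (0 : K))) J =
      Ideal.span {p : MvPolynomial (Fin n) K | ∃ b ∈ borderSet n O, p = monomial b 1} :=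
  maxdeg_homogeneous_deformation_general K n w hw O h0 hmax I hIhom c hmem hcompl J hJ
end
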